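/- Every rewrite step of the system R∖ on extended patterns preserves ground semantics: if p rewrites in one step to p' with respect to R∖, then ⟦p⟧ = ⟦p'⟧. -/

import Mathlib

/-- A constructor signature: a type of constructor symbols with arities. -/
structure Sig where
  C : Type
  ar : C → ℕ

/-- Values: ground constructor terms over the signature `S`. -/
inductive Val (S : Sig) : Type where
  | mk : (c : S.C) → (Fin (S.ar c) → Val S) → Val S

/-- Extended patterns. -/
inductive Pat (S : Sig) : Type where
  | var : ℕ → Pat S
  | cons : (c : S.C) → (Fin (S.ar c) → Pat S) → Pat S
  | plus : Pat S → Pat S → Pat S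
  | minus : Pat S → Pat S → Pat S
  | bot : Pat S

namespace Pat

variable {S : Sig}

/-- Variables occurring in a pattern. -/
def vars : Pat S → Set ℕ
  | var x => {x}
  | cons _ ps => ⋃ i, vars (ps i)
  | plus p q => vars p ∪ vars q
  | minus p q => vars p ∪ vars q
  | bot => ∅

/-- Linearity of extended patterns. -/
inductive Linear : Pat S → Prop where
  | var (x : ℕ) : Linear (var x)
  | cons (c : S.C) (ps : Fin (S.ar c) → Pat S) :
      (∀ i, Linear (ps i)) →
      (∀ i j, i ≠ j → Disjoint (vars (ps i)) (vars (ps j))) →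
      Linear (cons c ps)
  | plus {p q : Pat S} : Linear p → Linear q → Linear (plus p q)
  | minus {p q : Pat S} : Linear p → Linear q → Disjoint (vars p) (vars q) →
      Linear (minus p q)
  | bot : Linear bot

/-- Ground semantics of extended patterns. -/
def sem : Pat S → Set (Val S)
  | var _ => Set.univ
  | cons c ps => {v | ∃ vs : Fin (S.ar c) → Val S, v = Val.mk c vs ∧ ∀ i, vs i ∈ sem (ps i)}
  | plus p q => sem p ∪ sem q
  | minus p q => sem p \ sem q
  | bot => ∅

/-- The (extended) instance relation: `Matches p v` means pattern `p` matches value `v`. -/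
def Matches : Pat S → Val S → Prop
  | var _, _ => True
  | cons c ps, v => ∃ vs : Fin (S.ar c) → Val S, v = Val.mk c vs ∧ ∀ i, Matches (ps i) (vs i)
  | plus p q, v => Matches p v ∨ Matches q v
  | minus p q, v => Matches p v ∧ ¬ Matches q v
  | bot, _ => False

/-- Additive patterns: extended patterns containing no complement `∖`. -/
inductive Additive : Pat S → Prop where
  | var (x : ℕ) : Additive (var x)
  | cons (c : S.C) (ps : Fin (S.ar c) → Pat S) :
      (∀ i, Additive (ps i)) → Additive (cons c ps)
  | plus {p q : Pat S} : Additive p → Additive q → Additive (plus p q)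
  | bot : Additive bot

/-- Patterns containing no `⊥`. A pattern is *pure additive* if it is
`Additive` and `BotFree`. -/
inductive BotFree : Pat S → Prop where
  | var (x : ℕ) : BotFree (var x)
  | cons (c : S.C) (ps : Fin (S.ar c) → Pat S) :
      (∀ i, BotFree (ps i)) → BotFree (cons c ps)
  | plus {p q : Pat S} : BotFree p → BotFree q → BotFree (plus p q)
  | minus {p q : Pat S} : BotFree p → BotFree q → BotFree (minus p q)

/-- The sum `p₁ + ⋯ + pₙ` of a list of patterns (`⊥` for the empty list). -/
def sumList : List (Pat S) → Pat S
  | [] => bot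
  | [p] => p
  | p :: q :: r => plus p (sumList (q :: r))

variable [Fintype S.C]

/-- The right-hand side of rule (M6): `Σ_{c ∈ C} c(z₁,…,z_m) ∖ g(t₁,…,tₙ)`,
where the fresh variables are `z i = fv i`. -/
noncomputable def sumVM (fv : ℕ → ℕ) (g : S.C) (ts : Fin (S.ar g) → Pat S) : Pat S :=
  sumList ((Finset.univ : Finset S.C).toList.map fun c =>
    minus (cons c fun i => var (fv i)) (cons g ts))

/-- One step of the rewriting system `R∖` of Figure 1 (closed under contexts).
`fv` enumerates the fresh variables used by rule (M6). -/
inductive Step (fv : ℕ → ℕ) : Pat S → Pat S → Prop where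
  | addL {v : Pat S} : Additive v → Step fv (plus bot v) v
  | addR {v : Pat S} : Additive v → Step fv (plus v bot) v
  | empty {c : S.C} {ps : Fin (S.ar c) → Pat S} (i : Fin (S.ar c)) :
      (∀ j, Additive (ps j)) → ps i = bot → Step fv (cons c ps) bot
  | dist {c : S.C} {ps : Fin (S.ar c) → Pat S} (i : Fin (S.ar c)) {u w : Pat S} :
      (∀ j, Additive (ps j)) → ps i = plus u w →
      Step fv (cons c ps)
        (plus (cons c (Function.update ps i u)) (cons c (Function.update ps i w)))
  | minusMV {v : Pat S} {x : ℕ} : Additive v → Step fv (minus v (var x)) bot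
  | minusMB {v : Pat S} : Additive v → Step fv (minus v bot) v
  | minusMP {w v1 v2 : Pat S} : Additive w → Additive v1 → Additive v2 →
      Step fv (minus w (plus v1 v2)) (minus (minus w v1) v2)
  | minusVM {x : ℕ} {g : S.C} {ts : Fin (S.ar g) → Pat S} :
      (∀ j, Additive (ts j)) → (∀ j, BotFree (ts j)) →
      Step fv (minus (var x) (cons g ts)) (sumVM fv g ts)
  | minusBM {g : S.C} {vs : Fin (S.ar g) → Pat S} :
      (∀ j, Additive (vs j)) → Step fv (minus bot (cons g vs)) bot
  | minusPM {v w : Pat S} {g : S.C} {vs : Fin (S.ar g) → Pat S} :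
      Additive v → Additive w → (∀ j, Additive (vs j)) →
      Step fv (minus (plus v w) (cons g vs))
        (plus (minus v (cons g vs)) (minus w (cons g vs)))
  | minusFF {f : S.C} {vs ts : Fin (S.ar f) → Pat S} :
      (∀ j, Additive (vs j)) → (∀ j, Additive (ts j)) → (∀ j, BotFree (ts j)) →
      Step fv (minus (cons f vs) (cons f ts))
        (sumList (List.ofFn fun i => cons f (Function.update vs i (minus (vs i) (ts i)))))
  | minusFG {f g : S.C} {vs : Fin (S.ar f) → Pat S} {ws : Fin (S.ar g) → Pat S} :
      f ≠ g → (∀ j, Additive (vs j)) → (∀ j, Additive (ws j)) →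
      Step fv (minus (cons f vs) (cons g ws)) (cons f vs)
  | congCons {c : S.C} {ps : Fin (S.ar c) → Pat S} (i : Fin (S.ar c)) {p' : Pat S} :
      Step fv (ps i) p' → Step fv (cons c ps) (cons c (Function.update ps i p'))
  | congPlusL {p p' q : Pat S} : Step fv p p' → Step fv (plus p q) (plus p' q)
  | congPlusR {p q q' : Pat S} : Step fv q q' → Step fv (plus p q) (plus p q')
  | congMinusL {p p' q : Pat S} : Step fv p p' → Step fv (minus p q) (minus p' q)
  | congMinusR {p q q' : Pat S} : Step fv q q' → Step fv (minus p q) (minus p q')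

/-- Patterns containing no sum `+`. -/
inductive PlusFree : Pat S → Prop where
  | var (x : ℕ) : PlusFree (var x)
  | cons (c : S.C) (ps : Fin (S.ar c) → Pat S) :
      (∀ i, PlusFree (ps i)) → PlusFree (cons c ps)
  | minus {p q : Pat S} : PlusFree p → PlusFree q → PlusFree (minus p q)
  | bot : PlusFree bot

/-- Terms in which every `+` symbol has only `+` symbols above it:
sums are pushed to the top. -/
inductive TopPlus : Pat S → Prop where
  | leaf {p : Pat S} : PlusFree p → TopPlus p
  | plus {p q : Pat S} : TopPlus p → TopPlus q → TopPlus (plus p q)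

/-- `q` is a normal form of `p` w.r.t. the relation `R`. -/
def NormalFormOf (R : Pat S → Pat S → Prop) (p q : Pat S) : Prop :=
  Relation.ReflTransGen R p q ∧ ¬ ∃ r, R q r

end Pat

/-! The semantics of a constructor pattern `c(p₁,…,pₙ)` is the image of the product
`⟦p₁⟧ × ⋯ × ⟦pₙ⟧` under the injective map `Val.mk c`, and distinct constructors have disjoint
ranges which together cover all values. Each rule of `R∖` then becomes a set identity:
products distribute over a union in one coordinate (rule for `h(…, vᵢ + wᵢ, …)`), and
`Πⱼ sⱼ \ Πⱼ tⱼ = ⋃ᵢ (s₁ × ⋯ × (sᵢ \ tᵢ) × ⋯ × sₙ)` (rule for `f(v̄) ∖ f(t̄)`). -/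

namespace Set

open Function

variable {ι : Type*} [DecidableEq ι] {α : ι → Type*}

theorem mem_univ_pi_update {s : ∀ i, Set (α i)} {i : ι} {a : Set (α i)} {x : ∀ i, α i} :
    x ∈ pi univ (update s i a) ↔ x i ∈ a ∧ ∀ j ≠ i, x j ∈ s j := by
  rw [mem_univ_pi]
  exact forall_update_iff s fun j u => x j ∈ u

theorem univ_pi_eq_union_update {s : ∀ i, Set (α i)} {i : ι} {a b : Set (α i)}
    (hi : s i = a ∪ b) : pi univ s = pi univ (update s i a) ∪ pi univ (update s i b) := by
  ext x
  rw [mem_union, mem_univ_pi_update, mem_univ_pi_update, ← or_and_right, ← mem_union, ← hi,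
    mem_univ_pi]
  exact ⟨fun hx => ⟨hx i, fun j _ => hx j⟩,
    fun ⟨hxi, hx⟩ j => (eq_or_ne j i).elim (· ▸ hxi) (hx j)⟩

theorem univ_pi_sdiff_univ_pi (s t : ∀ i, Set (α i)) :
    pi univ s \ pi univ t = ⋃ i, pi univ (update s i (s i \ t i)) := by
  ext x
  simp only [mem_sdiff, mem_iUnion, mem_univ_pi_update]
  rw [mem_univ_pi, mem_univ_pi, not_forall]
  constructor
  · rintro ⟨hs, i, hi⟩
    exact ⟨i, ⟨hs i, hi⟩, fun j _ => hs j⟩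
  · rintro ⟨i, ⟨hsi, hti⟩, hs⟩
    exact ⟨fun j => (eq_or_ne j i).elim (· ▸ hsi) (hs j), i, hti⟩

end Set

namespace Val

variable {S : Sig}

theorem mk_injective (c : S.C) : Function.Injective (Val.mk c) := by
  intro us vs h
  cases h
  rfl

theorem iUnion_range_mk : ⋃ c, Set.range (Val.mk (S := S) c) = Set.univ :=
  Set.eq_univ_of_forall fun ⟨c, vs⟩ => Set.mem_iUnion.2 ⟨c, vs, rfl⟩

theorem disjoint_range_mk {c d : S.C} (h : c ≠ d) :
    Disjoint (Set.range (Val.mk c)) (Set.range (Val.mk d)) := by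
  rw [Set.disjoint_left]
  rintro _ ⟨us, rfl⟩ ⟨vs, hvs⟩
  cases hvs
  exact h rfl

end Val

namespace Pat

variable {S : Sig}

@[simp] theorem sem_var (x : ℕ) : (var x : Pat S).sem = Set.univ := rfl
@[simp] theorem sem_plus (p q : Pat S) : (plus p q).sem = p.sem ∪ q.sem := rfl
@[simp] theorem sem_minus (p q : Pat S) : (minus p q).sem = p.sem \ q.sem := rfl
@[simp] theorem sem_bot : (bot : Pat S).sem = ∅ := rfl

theorem sem_cons (c : S.C) (ps : Fin (S.ar c) → Pat S) :
    (cons c ps).sem = Val.mk c '' Set.univ.pi fun i => (ps i).sem := by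
  ext v
  simp only [sem, Set.mem_ofPred_eq, Set.mem_image, Set.mem_univ_pi]
  exact ⟨fun ⟨vs, hv, hvs⟩ => ⟨vs, hvs, hv.symm⟩, fun ⟨vs, hvs, hv⟩ => ⟨vs, hv.symm, hvs⟩⟩

theorem sem_cons_update (c : S.C) (ps : Fin (S.ar c) → Pat S) (i : Fin (S.ar c)) (q : Pat S) :
    (cons c (Function.update ps i q)).sem =
      Val.mk c '' Set.univ.pi (Function.update (fun j => (ps j).sem) i q.sem) := by
  rw [sem_cons]
  congr 2
  ext1 j
  exact Function.apply_update (fun _ => sem) ps i q j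

theorem sem_cons_var (c : S.C) (xs : Fin (S.ar c) → ℕ) :
    (cons c fun i => var (xs i)).sem = Set.range (Val.mk c) := by
  simp [sem_cons]

theorem sem_sumList (l : List (Pat S)) : (sumList l).sem = ⋃ p ∈ l, p.sem := by
  induction l using sumList.induct with
  | case1 => simp [sumList]
  | case2 p => simp [sumList]
  | case3 p q r ih => simp [sumList, ih]

theorem sem_sumList_ofFn {n : ℕ} (ps : Fin n → Pat S) :
    (sumList (List.ofFn ps)).sem = ⋃ i, (ps i).sem := by
  simp [sem_sumList]

variable [Fintype S.C]

theorem sem_sumVM (fv : ℕ → ℕ) (g : S.C) (ts : Fin (S.ar g) → Pat S) :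
    (sumVM fv g ts).sem = Set.univ \ (cons g ts).sem := by
  simp [sumVM, sem_sumList, sem_cons_var, ← Set.iUnion_sdiff, Val.iUnion_range_mk]

theorem sem_eq_of_step {fv : ℕ → ℕ} {p p' : Pat S} (h : Step fv p p') : p.sem = p'.sem := by
  induction h with
  | addL _ | addR _ | minusMV _ | minusMB _ | minusBM _ => simp
  | minusMP _ _ _ => exact (Set.sdiff_sdiff).symm
  | minusPM _ _ _ => exact Set.union_sdiff_distrib
  | minusVM _ _ => rw [sem_sumVM, sem_minus, sem_var]
  | @empty c ps i _ hi =>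
    rw [sem_cons, Set.univ_pi_eq_empty (i := i) (by simp [hi]), Set.image_empty, sem_bot]
  | @dist c ps i u w _ hi =>
    rw [sem_plus, sem_cons_update, sem_cons_update, ← Set.image_union, sem_cons,
      Set.univ_pi_eq_union_update (i := i) (a := u.sem) (b := w.sem) (by simp [hi])]
  | @minusFF f vs ts _ _ _ =>
    simp only [sem_sumList_ofFn, sem_cons_update]
    simp only [sem_minus, sem_cons,
      ← Set.image_sdiff (Val.mk_injective f), Set.univ_pi_sdiff_univ_pi, Set.image_iUnion]
  | minusFG hfg _ _ =>
    rw [sem_minus, sem_cons, sem_cons]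
    exact Disjoint.sdiff_eq_left <| (Val.disjoint_range_mk hfg).mono
      (Set.image_subset_range _ _) (Set.image_subset_range _ _)
  | @congCons c ps i q _ ih =>
    rw [sem_cons_update, ← ih, Function.update_eq_self_iff.2 rfl, sem_cons]
  | congPlusL _ ih | congPlusR _ ih | congMinusL _ ih | congMinusR _ ih =>
    simp only [sem_plus, sem_minus, ih]

end Pat

theorem stmt3_general (S : Sig) [Fintype S.C] (fv : ℕ → ℕ)
    (p p' : Pat S) (hstep : Pat.Step fv p p') :
    p.sem = p'.sem :=
  Pat.sem_eq_of_step hstep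

theorem stmt3 (S : Sig) [Fintype S.C] (fv : ℕ → ℕ) (hfv : Function.Injective fv)
    (p p' : Pat S) (hlin : p.Linear) (hstep : Pat.Step fv p p') :
    p.sem = p'.sem :=
  stmt3_general S fv p p' hstep
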